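/- Let p be a prime and m ≥ 1. The kernel of the natural surjection mod Φ_m : ℤ_p[[t^ℤ̂]] → ℤ_p[t]/(Φ_m(t)) equals the principal ideal of ℤ_p[[t^ℤ̂]] generated by Φ_m(t). -/

import Mathlib

open Polynomial

set_option synthInstance.maxHeartbeats 1000000
set_option maxHeartbeats 1000000

noncomputable section
noncomputable section

/-- The ring of profinite integers `ẐZ = lim_n ℤ/nℤ`, realized as the subring of
`∏ n : ℕ+, ZMod n` consisting of families compatible under the natural projections. -/
def ZHatSubring : Subring (∀ n : ℕ+, ZMod n) where
  carrier := {f | ∀ (m n : ℕ+) (h : (m : ℕ) ∣ (n : ℕ)), ZMod.castHom h (ZMod m) (f n) = f m}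
  mul_mem' := fun {a b} ha hb m n h => by
    simp only [Pi.mul_apply, map_mul, ha m n h, hb m n h]
  one_mem' := fun m n h => map_one _
  add_mem' := fun {a b} ha hb m n h => by
    simp only [Pi.add_apply, map_add, ha m n h, hb m n h]
  zero_mem' := fun m n h => map_zero _
  neg_mem' := fun {a} ha m n h => by
    simp only [Pi.neg_apply, map_neg, ha m n h]

/-- The profinite integers as a type. -/
abbrev ZHat : Type := ZHatSubring

instance : CommRing ZHat := inferInstance

/-- The quotient ring `R[t]/(tⁿ - 1)`. -/
abbrev CycModN (R : Type) [CommRing R] (n : ℕ+) : Type :=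
  Polynomial R ⧸ Ideal.span {(X : Polynomial R) ^ (n : ℕ) - 1}

lemma X_pow_sub_one_dvd {R : Type} [CommRing R] {m n : ℕ} (h : m ∣ n) :
    (X : Polynomial R) ^ m - 1 ∣ (X : Polynomial R) ^ n - 1 := by
  obtain ⟨k, rfl⟩ := h
  simpa [pow_mul] using sub_dvd_pow_sub_pow ((X : Polynomial R) ^ m) 1 k

/-- The natural transition map `R[t]/(tⁿ-1) → R[t]/(tᵐ-1)` for `m ∣ n`. -/
def cycTransition (R : Type) [CommRing R] {m n : ℕ+} (h : (m : ℕ) ∣ (n : ℕ)) :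
    CycModN R n →+* CycModN R m :=
  Ideal.Quotient.factor
    (Ideal.span_singleton_le_span_singleton.mpr (X_pow_sub_one_dvd h))

/-- The completed group ring `R[[t^Ẑ]] = lim_n R[t]/(tⁿ-1)`, realized as the subring of
`∏ n : ℕ+, R[t]/(tⁿ-1)` of families compatible under the transition maps. -/
def CompletedCycRing (R : Type) [CommRing R] : Subring (∀ n : ℕ+, CycModN R n) where
  carrier := {f | ∀ (m n : ℕ+) (h : (m : ℕ) ∣ (n : ℕ)), cycTransition R h (f n) = f m}
  mul_mem' := fun {a b} ha hb m n h => by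
    simp only [Pi.mul_apply, map_mul, ha m n h, hb m n h]
  one_mem' := fun m n h => map_one _
  add_mem' := fun {a b} ha hb m n h => by
    simp only [Pi.add_apply, map_add, ha m n h, hb m n h]
  zero_mem' := fun m n h => map_zero _
  neg_mem' := fun {a} ha m n h => by
    simp only [Pi.neg_apply, map_neg, ha m n h]

instance completedCycRingCommRing (R : Type) [CommRing R] :
    CommRing (CompletedCycRing R) := inferInstance

/-- The natural ring homomorphism `R[t] → R[[t^Ẑ]]`, `f ↦ (f mod (tⁿ-1))ₙ`. -/
def polyToCompleted (R : Type) [CommRing R] : Polynomial R →+* CompletedCycRing R :=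
  RingHom.codRestrict (Pi.ringHom fun n => Ideal.Quotient.mk _) _
    (fun f m n h => by
      simp [cycTransition, Pi.ringHom_apply]
      rfl)

/-- The natural ring homomorphism `ℤ[t] → R[[t^Ẑ]]`. -/
def intPolyEmb (R : Type) [CommRing R] : Polynomial ℤ →+* CompletedCycRing R :=
  (polyToCompleted R).comp (Polynomial.mapRingHom (Int.castRingHom R))


/-- The natural map `mod Φ_m : R[[t^Ẑ]] → R[t]/(Φ_m(t))`, obtained as the composite
`R[[t^Ẑ]] → R[t]/(tᵐ-1) → R[t]/(Φ_m(t))`. -/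
def modPhi (R : Type) [CommRing R] (m : ℕ+) :
    CompletedCycRing R →+* Polynomial R ⧸ Ideal.span {Polynomial.cyclotomic (m : ℕ) R} :=
  (Ideal.Quotient.factor (Ideal.span_singleton_le_span_singleton.mpr
      (Polynomial.cyclotomic.dvd_X_pow_sub_one (m : ℕ) R))).comp
    ((Pi.evalRingHom _ m).comp (CompletedCycRing R).subtype)

/-!
Write `Aₙ = R[t]/(tⁿ - 1)`. If `x` lies in the kernel of `mod Φₘ`, then at every level `N`
divisible by `m` the component `x_N` is `Φₘ · W_N` for a polynomial `W_N`. Since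
`(t^(n*c) - 1)/Φₘ ≡ c · (tⁿ - 1)/Φₘ` modulo `tⁿ - 1`, two such solutions at levels `N ∣ N'` with
`N = n * c` agree in `Aₙ` modulo `c`. Taking `N = n * m * p^k`, the images of `W_N` in `Aₙ` form a
`p`-adic Cauchy sequence, compatible in `n` up to `p^k`. Each `Aₙ` is a finite module over the
Noetherian `p`-adically complete ring `R`, hence `p`-adically complete and separated, so the limits
exist and form an element `y` of the inverse limit with `y · Φₘ = x`.
-/
universe u

theorem IsPrecomplete.of_finite {R : Type u} [CommRing R] [IsNoetherianRing R] (I : Ideal R)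
    [IsPrecomplete I R] (M : Type u) [AddCommGroup M] [Module R M] [Module.Finite R M] :
    IsPrecomplete I M := by
  rw [← AdicCompletion.of_surjective_iff]
  intro ξ
  obtain ⟨t, rfl⟩ := (AdicCompletion.ofTensorProduct_bijective_of_finite_of_isNoetherian I M).2 ξ
  induction t using TensorProduct.induction_on with
  | zero => exact ⟨0, by simp⟩
  | tmul r x =>
    obtain ⟨a, rfl⟩ := AdicCompletion.of_surjective I R r
    refine ⟨a • x, ?_⟩
    rw [AdicCompletion.ofTensorProduct_tmul, map_smul, ← algebraMap_smul (AdicCompletion I R)]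
    rfl
  | add u v hu hv =>
    obtain ⟨a, ha⟩ := hu
    obtain ⟨b, hb⟩ := hv
    exact ⟨a + b, by rw [map_add, ha, hb, map_add]⟩

section PowDvd

variable {R A : Type*} [CommRing R] [CommRing A] [Algebra R A] {r : R}

theorem mem_span_singleton_pow_smul_top_iff {k : ℕ} {a : A} :
    a ∈ Ideal.span {r} ^ k • (⊤ : Submodule R A) ↔ algebraMap R A r ^ k ∣ a := by
  rw [Ideal.span_singleton_pow, Ideal.smul_top_eq_map, Submodule.restrictScalars_mem,
    Ideal.map_span, Set.image_singleton, Ideal.mem_span_singleton, map_pow]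

theorem IsHausdorff.eq_zero_of_forall_pow_dvd [IsHausdorff (Ideal.span {r}) A] {a : A}
    (h : ∀ k, algebraMap R A r ^ k ∣ a) : a = 0 :=
  IsHausdorff.haus ‹_› a fun k ↦ SModEq.zero.2 (mem_span_singleton_pow_smul_top_iff.2 (h k))

theorem IsPrecomplete.exists_forall_pow_dvd_sub [IsPrecomplete (Ideal.span {r}) A] (a : ℕ → A)
    (h : ∀ k, algebraMap R A r ^ k ∣ a (k + 1) - a k) :
    ∃ L, ∀ k, algebraMap R A r ^ k ∣ L - a k := by
  have cauchy {k l : ℕ} (hkl : k ≤ l) : algebraMap R A r ^ k ∣ a l - a k := by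
    induction l, hkl using Nat.le_induction with
    | base => simp
    | succ l hkl ih =>
      rw [← sub_add_sub_cancel]
      exact dvd_add ((pow_dvd_pow _ hkl).trans (h l)) ih
  obtain ⟨L, hL⟩ := IsPrecomplete.prec ‹_› fun {k l} hkl ↦
    (SModEq.sub_mem.2 (mem_span_singleton_pow_smul_top_iff.2 (cauchy hkl))).symm
  exact ⟨L, fun k ↦ mem_span_singleton_pow_smul_top_iff.1 (SModEq.sub_mem.1 (hL k).symm)⟩

end PowDvd

namespace CycModN

variable (R : Type) [CommRing R]

abbrev mk (n : ℕ+) : R[X] →+* CycModN R n := Ideal.Quotient.mk _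

variable {R}

instance (n : ℕ+) : Module.Finite R (CycModN R n) :=
  (monic_X_pow_sub_C (1 : R) n.ne_zero).finite_quotient

theorem mk_surjective (n : ℕ+) : Function.Surjective (mk R n) :=
  Ideal.Quotient.mk_surjective

theorem mk_eq_mk_iff {n : ℕ+} {P Q : R[X]} : mk R n P = mk R n Q ↔ X ^ (n : ℕ) - 1 ∣ P - Q := by
  rw [Ideal.Quotient.eq, Ideal.mem_span_singleton]

theorem mk_X_pow_eq_one (n : ℕ+) : mk R n X ^ (n : ℕ) = 1 := by
  rw [← map_pow, ← map_one (mk R n), mk_eq_mk_iff]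

theorem cycTransition_mk {n' n : ℕ+} (h : (n' : ℕ) ∣ n) (P : R[X]) :
    cycTransition R h (mk R n P) = mk R n' P :=
  Ideal.Quotient.factor_mk _ _

-- `(X^(n*c) - 1) / (Xⁿ - 1) = ∑_{j < c} X^(n*j)` is `≡ c` modulo `Xⁿ - 1`.
theorem natCast_dvd_mk_sub_of_dvd_mul_sub {n : ℕ+} {c : ℕ} {f P Q : R[X]} (hf : f.Monic)
    (hfn : f ∣ X ^ (n : ℕ) - 1) (h : X ^ ((n : ℕ) * c) - 1 ∣ f * (P - Q)) :
    (c : CycModN R n) ∣ mk R n P - mk R n Q := by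
  obtain ⟨g, hg⟩ := hfn
  obtain ⟨q, hq⟩ := h
  have hgeom : (X : R[X]) ^ ((n : ℕ) * c) - 1 =
      (X ^ (n : ℕ) - 1) * ∑ j ∈ Finset.range c, (X ^ (n : ℕ)) ^ j := by
    rw [pow_mul, mul_comm (X ^ (n : ℕ) - 1), geom_sum_mul]
  have hPQ : P - Q = g * (∑ j ∈ Finset.range c, (X ^ (n : ℕ)) ^ j) * q :=
    hf.isRegular.left (by dsimp only; rw [hq, hgeom, hg]; ring)
  have hsum : mk R n (∑ j ∈ Finset.range c, (X ^ (n : ℕ)) ^ j) = c := by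
    simp [mk_X_pow_eq_one]
  refine ⟨mk R n g * mk R n q, ?_⟩
  rw [← map_sub, hPQ, map_mul, map_mul, hsum]
  ring

end CycModN

theorem modPhi_eq_mk {R : Type} [CommRing R] {m : ℕ+} {x : CompletedCycRing R} {P : R[X]}
    (hP : x.1 m = CycModN.mk R m P) : modPhi R m x = Ideal.Quotient.mk _ P := by
  rw [modPhi, RingHom.comp_apply, RingHom.comp_apply, Subring.subtype_apply, Pi.evalRingHom_apply,
    hP, Ideal.Quotient.factor_mk]

theorem intPolyEmb_apply {R : Type} [CommRing R] (f : ℤ[X]) (n : ℕ+) :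
    (intPolyEmb R f).1 n = CycModN.mk R n (f.map (Int.castRingHom R)) :=
  rfl

theorem modPhi_intPolyEmb_cyclotomic {R : Type} [CommRing R] (m : ℕ+) :
    modPhi R m (intPolyEmb R (cyclotomic m ℤ)) = 0 := by
  rw [modPhi_eq_mk (intPolyEmb_apply _ _), map_cyclotomic_int, Ideal.Quotient.eq_zero_iff_mem]
  exact Ideal.mem_span_singleton_self _

section Kernel

variable {R : Type} [CommRing R] {m : ℕ+} {x : CompletedCycRing R}

theorem exists_mk_cyclotomic_mul_eq_of_modPhi_eq_zero (hx : modPhi R m x = 0) {N : ℕ+}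
    (hmN : (m : ℕ) ∣ N) : ∃ W, CycModN.mk R N (cyclotomic m R * W) = x.1 N := by
  obtain ⟨ξ, hξ⟩ := CycModN.mk_surjective N (x.1 N)
  have hxm : x.1 m = CycModN.mk R m ξ := by
    rw [← x.2 m N hmN, ← hξ, CycModN.cycTransition_mk]
  rw [modPhi_eq_mk hxm, Ideal.Quotient.eq_zero_iff_mem, Ideal.mem_span_singleton] at hx
  obtain ⟨W, rfl⟩ := hx
  exact ⟨W, hξ⟩

theorem natCast_dvd_mk_sub_of_mk_cyclotomic_mul_eq {n' n N N' : ℕ+} {c : ℕ} (hn' : (n' : ℕ) ∣ n)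
    (hmn : (m : ℕ) ∣ n) (hN : (N : ℕ) = n * c) (hNN' : (N : ℕ) ∣ N') {W W' : R[X]}
    (hW : CycModN.mk R N (cyclotomic m R * W) = x.1 N)
    (hW' : CycModN.mk R N' (cyclotomic m R * W') = x.1 N') :
    (c : CycModN R n') ∣ CycModN.mk R n' W' - CycModN.mk R n' W := by
  have hWW' : CycModN.mk R N (cyclotomic m R * W') = CycModN.mk R N (cyclotomic m R * W) := by
    rw [hW, ← x.2 N N' hNN', ← hW', CycModN.cycTransition_mk]
  rw [CycModN.mk_eq_mk_iff, hN, ← mul_sub] at hWW'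
  have hc := CycModN.natCast_dvd_mk_sub_of_dvd_mul_sub (cyclotomic.monic m R)
    ((cyclotomic.dvd_X_pow_sub_one m R).trans (X_pow_sub_one_dvd hmn)) hWW'
  simpa [CycModN.cycTransition_mk] using map_dvd (cycTransition R hn') hc

end Kernel

section AdicallyComplete

variable {R : Type} [CommRing R] [IsNoetherianRing R] {p : ℕ}
  [IsAdicComplete (Ideal.span {(p : R)}) R]

namespace CycModN

instance (n : ℕ+) : IsHausdorff (Ideal.span {(p : R)}) (CycModN R n) :=
  .of_le_jacobson _ _ (IsAdicComplete.le_jacobson_bot _)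

instance (n : ℕ+) : IsPrecomplete (Ideal.span {(p : R)}) (CycModN R n) :=
  .of_finite _ _

theorem eq_zero_of_forall_pow_dvd {n : ℕ+} {a : CycModN R n} (h : ∀ k, (p : CycModN R n) ^ k ∣ a) :
    a = 0 :=
  IsHausdorff.eq_zero_of_forall_pow_dvd (r := (p : R)) (by simpa using h)

theorem exists_forall_pow_dvd_sub {n : ℕ+} (a : ℕ → CycModN R n)
    (h : ∀ k, (p : CycModN R n) ^ k ∣ a (k + 1) - a k) :
    ∃ L, ∀ k, (p : CycModN R n) ^ k ∣ L - a k := by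
  simpa using IsPrecomplete.exists_forall_pow_dvd_sub (r := (p : R)) a (by simpa using h)

end CycModN

theorem CompletedCycRing.exists_forall_pow_dvd_sub (u : ∀ n : ℕ+, ℕ → CycModN R n)
    (hcauchy : ∀ n k, (p : CycModN R n) ^ k ∣ u n (k + 1) - u n k)
    (hcompat : ∀ (n' n : ℕ+) (h : (n' : ℕ) ∣ n) (k : ℕ),
      (p : CycModN R n') ^ k ∣ cycTransition R h (u n k) - u n' k) :
    ∃ y : CompletedCycRing R, ∀ n k, (p : CycModN R n) ^ k ∣ y.1 n - u n k := by
  choose L hL using fun n ↦ CycModN.exists_forall_pow_dvd_sub (u n) (hcauchy n)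
  refine ⟨⟨L, fun n' n h ↦ sub_eq_zero.1 <|
    CycModN.eq_zero_of_forall_pow_dvd (p := p) fun k ↦ ?_⟩, hL⟩
  have hLn : (p : CycModN R n') ^ k ∣ cycTransition R h (L n - u n k) := by
    simpa using map_dvd (cycTransition R h) (hL n k)
  have hsplit : cycTransition R h (L n) - L n' =
      cycTransition R h (L n - u n k) + (cycTransition R h (u n k) - u n' k) - (L n' - u n' k) := by
    rw [map_sub]; ring
  rw [hsplit]
  exact (hLn.add (hcompat n' n h k)).sub (hL n' k)

theorem exists_mul_cyclotomic_eq_of_modPhi_eq_zero (hp : p ≠ 0) {m : ℕ+} {x : CompletedCycRing R}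
    (hx : modPhi R m x = 0) : ∃ y, y * intPolyEmb R (cyclotomic m ℤ) = x := by
  let P : ℕ+ := ⟨p, Nat.pos_of_ne_zero hp⟩
  have hlevel (n : ℕ+) (k : ℕ) : ((n * m * P ^ k : ℕ+) : ℕ) = n * m * p ^ k := by
    rw [PNat.mul_coe, PNat.mul_coe, PNat.pow_coe, PNat.mk_coe]
  choose W hW using fun (n : ℕ+) (k : ℕ) ↦ exists_mk_cyclotomic_mul_eq_of_modPhi_eq_zero hx
    (N := n * m * P ^ k) ⟨n * p ^ k, by rw [hlevel]; ring⟩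
  have hclose (n' n : ℕ+) (h : (n' : ℕ) ∣ n) {k l : ℕ} (hkl : k ≤ l) :
      (p : CycModN R n') ^ k ∣ CycModN.mk R n' (W n l) - CycModN.mk R n' (W n' k) := by
    have hNN' : (n' * m * p ^ k) ∣ (n * m * p ^ l) :=
      Nat.mul_dvd_mul (Nat.mul_dvd_mul_right h _) (Nat.pow_dvd_pow p hkl)
    simpa using natCast_dvd_mk_sub_of_mk_cyclotomic_mul_eq (n := n' * m) (c := p ^ k)
      (dvd_mul_right ..) (dvd_mul_left ..) (hlevel n' k) (by rwa [hlevel, hlevel])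
      (hW n' k) (hW n l)
  obtain ⟨y, hy⟩ := CompletedCycRing.exists_forall_pow_dvd_sub (fun n k ↦ CycModN.mk R n (W n k))
    (fun n k ↦ hclose n n dvd_rfl k.le_succ)
    (fun n' n h k ↦ by simpa [CycModN.cycTransition_mk] using hclose n' n h le_rfl)
  refine ⟨y, Subtype.ext <| funext fun n ↦ sub_eq_zero.1 <|
    CycModN.eq_zero_of_forall_pow_dvd (p := p) fun k ↦ ?_⟩
  have hsol : CycModN.mk R n (W n k) * CycModN.mk R n (cyclotomic m R) = x.1 n := by
    rw [← map_mul, mul_comm, ← CycModN.cycTransition_mk (n := n * m * P ^ k)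
      ⟨m * p ^ k, by rw [hlevel]; ring⟩, hW, x.2]
  have hprod : (y * intPolyEmb R (cyclotomic m ℤ)).1 n - x.1 n =
      (y.1 n - CycModN.mk R n (W n k)) * CycModN.mk R n (cyclotomic m R) := by
    rw [← hsol, Subring.coe_mul, Pi.mul_apply, intPolyEmb_apply, map_cyclotomic_int]
    ring
  rw [hprod]
  exact (hy n k).mul_right _

theorem ker_modPhi_eq_span_cyclotomic (hp : p ≠ 0) (m : ℕ+) :
    RingHom.ker (modPhi R m) = Ideal.span {intPolyEmb R (cyclotomic m ℤ)} := by
  refine le_antisymm (fun x hx ↦ ?_) ?_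
  · obtain ⟨y, hy⟩ := exists_mul_cyclotomic_eq_of_modPhi_eq_zero hp hx
    exact Ideal.mem_span_singleton'.2 ⟨y, hy⟩
  · rw [Ideal.span_le, Set.singleton_subset_iff, SetLike.mem_coe, RingHom.mem_ker]
    exact modPhi_intPolyEmb_cyclotomic m

end AdicallyComplete

/-- For a prime `p` and `m ≥ 1`, the kernel of the natural surjection
`mod Φ_m : ℤ_p[[t^Ẑ]] → ℤ_p[t]/(Φ_m(t))` equals the principal ideal generated by `Φ_m(t)`. -/
theorem ker_modPhi_eq_span_cyclotomic_padic (p : ℕ) [Fact p.Prime] (m : ℕ+) :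
    RingHom.ker (modPhi (PadicInt p) m)
      = Ideal.span {intPolyEmb (PadicInt p) (cyclotomic (m : ℕ) ℤ)} := by
  have : IsAdicComplete (Ideal.span {(p : ℤ_[p])}) ℤ_[p] :=
    PadicInt.maximalIdeal_eq_span_p (p := p) ▸ inferInstance
  exact ker_modPhi_eq_span_cyclotomic (Fact.out : p.Prime).ne_zero m
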